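/- arXiv:2101.12123 — 3 statements merged into one kernel-verified Lean document; each statement's English description precedes it below -/
import Mathlib

section
/- For all n : ℕ and all 0-indexed positions p < q < 2^n - 1, if the letters of BSP(n) at positions p and q are both equal to some i, then there exists a position r with p < r < q such that the letter of BSP(n) at position r is strictly greater than i. -/
def BSP : ℕ → List ℕ
  | 0 => []
  | n+1 => BSP n ++ [n+1] ++ BSP n

/-! Two equal letters of `BSP (n+1) = BSP n ++ (n+1) :: BSP n` either lie in the same copy of
`BSP n`, where induction applies, or on opposite sides of the middle letter `n+1`, which exceeds
every letter of `BSP n`; the middle letter itself occurs only once. -/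

namespace List

variable {α : Type*}

theorem getElem?_append_cons_eq_some {l₁ l₂ : List α} {c a : α} {k : ℕ} :
    (l₁ ++ c :: l₂)[k]? = some a ↔
      (k < l₁.length ∧ l₁[k]? = some a) ∨ (k = l₁.length ∧ c = a) ∨
        (l₁.length < k ∧ l₂[k - (l₁.length + 1)]? = some a) := by
  rcases lt_trichotomy k l₁.length with hk | rfl | hk
  · simp [getElem?_append_left hk, hk, hk.ne, Nat.not_lt_of_gt hk]
  · simp
  · rw [getElem?_append_right hk.le, getElem?_cons, if_neg (by omega)]
    simp [hk, hk.ne', Nat.not_lt_of_gt hk, Nat.sub_add_eq]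

def SeparatesRepeats [Preorder α] (l : List α) : Prop :=
  ∀ ⦃p q : ℕ⦄ ⦃a : α⦄, p < q → l[p]? = some a → l[q]? = some a →
    ∃ r b, p < r ∧ r < q ∧ l[r]? = some b ∧ a < b

theorem SeparatesRepeats.append_cons [Preorder α] {l₁ l₂ : List α} {c : α}
    (h₁ : l₁.SeparatesRepeats) (h₂ : l₂.SeparatesRepeats)
    (hc₁ : ∀ x ∈ l₁, x < c) (hc₂ : ∀ x ∈ l₂, x < c) :
    (l₁ ++ c :: l₂).SeparatesRepeats := by
  intro p q a hpq hp hq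
  rw [getElem?_append_cons_eq_some] at hp hq
  rcases hp with ⟨hpl, hp⟩ | ⟨rfl, rfl⟩ | ⟨hpl, hp⟩
  · rcases hq with ⟨hql, hq⟩ | ⟨rfl, rfl⟩ | ⟨hql, -⟩
    · obtain ⟨r, b, hpr, hrq, hr, hab⟩ := h₁ hpq hp hq
      exact ⟨r, b, hpr, hrq, by rw [getElem?_append_left (by omega), hr], hab⟩
    · exact absurd (hc₁ _ (mem_of_getElem? hp)) (lt_irrefl _)
    · exact ⟨l₁.length, c, hpl, hql, by simp, hc₁ _ (mem_of_getElem? hp)⟩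
  · rcases hq with ⟨hql, -⟩ | ⟨hql, -⟩ | ⟨-, hq⟩
    · omega
    · omega
    · exact absurd (hc₂ _ (mem_of_getElem? hq)) (lt_irrefl _)
  · rcases hq with ⟨hql, -⟩ | ⟨hql, -⟩ | ⟨-, hq⟩
    · omega
    · omega
    obtain ⟨r, b, hpr, hrq, hr, hab⟩ := h₂ (by omega) hp hq
    refine ⟨r + (l₁.length + 1), b, by omega, by omega, ?_, hab⟩
    rw [getElem?_append_cons_eq_some]
    exact Or.inr (Or.inr ⟨by omega, by simpa using hr⟩)

end List

theorem length_BSP (n : ℕ) : (BSP n).length = 2 ^ n - 1 := by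
  induction n with
  | zero => rfl
  | succ n ih =>
    simp only [BSP, List.length_append, List.length_singleton, ih, pow_succ]
    have := n.one_le_two_pow
    omega

theorem lt_of_mem_BSP {n x : ℕ} (hx : x ∈ BSP n) : x < n + 1 := by
  induction n with
  | zero => simp [BSP] at hx
  | succ n ih =>
    simp only [BSP, List.mem_append, List.mem_singleton] at hx
    rcases hx with (hx | rfl) | hx <;> grind

theorem separatesRepeats_BSP (n : ℕ) : (BSP n).SeparatesRepeats := by
  induction n with
  | zero => simp [BSP, List.SeparatesRepeats]
  | succ n ih =>
    rw [BSP, List.append_assoc, List.singleton_append]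
    exact ih.append_cons ih (fun _ => lt_of_mem_BSP) (fun _ => lt_of_mem_BSP)

theorem bsp_separation (n p q i : ℕ) (hpq : p < q) (hq : q < 2 ^ n - 1)
    (hp' : (BSP n).getD p 0 = i) (hq' : (BSP n).getD q 0 = i) :
    ∃ r, p < r ∧ r < q ∧ i < (BSP n).getD r 0 := by
  rw [← length_BSP] at hq
  have getElem?_eq {k} (hk : k < (BSP n).length) (h : (BSP n).getD k 0 = i) :
      (BSP n)[k]? = some i := by
    rw [List.getElem?_eq_getElem hk, ← h, List.getD_eq_getElem]
  obtain ⟨r, b, hpr, hrq, hr, hib⟩ :=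
    separatesRepeats_BSP n hpq (getElem?_eq (hpq.trans hq) hp') (getElem?_eq hq hq')
  exact ⟨r, hpr, hrq, by simpa [List.getD_eq_getElem?_getD, hr] using hib⟩
end

section
/- For every n : ℕ, every list w : List α of length 2^n, and every address β < 2^n, the access-pattern word AP(n, β, w[β]) is a sublist (subsequence) of the shuffle word S(n, w). -/
def Shuffle {α : Type*} : ℕ → List α → List (α ⊕ ℕ)
  | 0, w => w.map Sum.inl
  | n+1, w => Shuffle n (w.take (2 ^ n)) ++ [Sum.inr (n + 1)] ++ Shuffle n (w.drop (2 ^ n))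

def AP {α : Type*} : ℕ → ℕ → α → List (α ⊕ ℕ)
  | 0, _, d => [Sum.inl d]
  | n+1, β, d =>
    if 2 ^ n ≤ β then Sum.inr (n + 1) :: AP n (β - 2 ^ n) d
    else AP n β d ++ [Sum.inr (n + 1)]

/-! Induction on `n`. The top bit of `β` says in which half of `w` the entry `w[β]` lies, and
`AP` places the marker `n + 1` exactly on the other side of its recursive part, which is where
`Shuffle` puts the marker between the shuffles of the two halves. -/

theorem AP_succ_of_le {α : Type*} {n β : ℕ} (d : α) (h : 2 ^ n ≤ β) :
    AP (n + 1) β d = Sum.inr (n + 1) :: AP n (β - 2 ^ n) d := by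
  simp [AP, h]

theorem AP_succ_of_lt {α : Type*} {n β : ℕ} (d : α) (h : β < 2 ^ n) :
    AP (n + 1) β d = AP n β d ++ [Sum.inr (n + 1)] := by
  simp [AP, Nat.not_le.mpr h]

theorem AP_getElem_sublist_shuffle {α : Type*} :
    ∀ (n β : ℕ) (w : List α) (hβw : β < w.length), β < 2 ^ n →
      (AP n β w[β]).Sublist (Shuffle n w)
  | 0, β, w, hβw, hβ => by
    obtain rfl : β = 0 := by omega
    exact List.singleton_sublist.mpr (List.mem_map_of_mem (List.getElem_mem hβw))
  | n + 1, β, w, hβw, hβ => by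
    by_cases hhigh : 2 ^ n ≤ β
    · have hβw' : β - 2 ^ n < (w.drop (2 ^ n)).length := by
        rw [List.length_drop]; omega
      have hget : w[β] = (w.drop (2 ^ n))[β - 2 ^ n] := by
        simp only [List.getElem_drop]; congr 1; omega
      have hrec := AP_getElem_sublist_shuffle n (β - 2 ^ n) _ hβw' (by rw [pow_succ] at hβ; omega)
      rw [AP_succ_of_le _ hhigh, hget, Shuffle, List.append_assoc]
      exact List.sublist_append_of_sublist_right (hrec.cons_cons _)
    · have hlow : β < 2 ^ n := by omega
      have hβw' : β < (w.take (2 ^ n)).length := by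
        rw [List.length_take]; omega
      have hget : w[β] = (w.take (2 ^ n))[β] := (List.getElem_take ..).symm
      have hrec := AP_getElem_sublist_shuffle n β _ hβw' hlow
      rw [AP_succ_of_lt _ hlow, hget, Shuffle, List.append_assoc]
      exact hrec.append (List.sublist_append_left _ _)

theorem ap_sublist_shuffle_general {α : Type*} (n β : ℕ) (w : List α)
    (hβ : β < 2 ^ n) (hβw : β < w.length) :
    List.Sublist (AP n β (w.get ⟨β, hβw⟩)) (Shuffle n w) :=
  AP_getElem_sublist_shuffle n β w hβw hβ

theorem ap_sublist_shuffle {α : Type*} (n β : ℕ) (w : List α)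
    (hw : w.length = 2 ^ n) (hβ : β < 2 ^ n) (hβw : β < w.length) :
    List.Sublist (AP n β (w.get ⟨β, hβw⟩)) (Shuffle n w) :=
  ap_sublist_shuffle_general n β w hβ hβw
end

section
/- For every n : ℕ, every list w : List α of length 2^n, every address β < 2^n, and every d : α, if the access-pattern word AP(n, β, d) is a sublist of S(n, w), then d = w[β]. In other words, the access pattern for address β can be read off the shuffle word only with the value actually stored at address β. -/
/-!
`S(n+1, w)` contains the separator `n+1` exactly once, between `S(n, ·)` of the two halves of
`w`, and never a larger one. So the first (resp. last) letter `n+1` of `AP(n+1, β, d)` must be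
matched with that separator, which forces the rest of the pattern into the upper (resp. lower)
half, the one containing address `β`. Induction on `n` then reaches a single letter `w[β]`.
-/

namespace List

variable {γ : Type*} {a : γ} {l l₁ l₂ : List γ}

theorem sublist_of_cons_sublist_append_cons (ha : a ∉ l₁) (h : a :: l <+ l₁ ++ a :: l₂) :
    l <+ l₂ := by
  obtain ⟨p, q, hpq, hp, hq⟩ := sublist_append_iff.1 h
  cases p with
  | nil =>
    obtain rfl : q = a :: l := hpq.symm
    exact cons_sublist_cons.1 hq
  | cons b p =>
    obtain ⟨rfl, -⟩ := cons_eq_cons.1 hpq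
    exact absurd (hp.subset mem_cons_self) ha

theorem sublist_of_concat_sublist_append_cons (ha : a ∉ l₂) (h : l ++ [a] <+ l₁ ++ a :: l₂) :
    l <+ l₁ := by
  have h' : a :: l.reverse <+ l₂.reverse ++ a :: l₁.reverse := by simpa using h.reverse
  simpa using (sublist_of_cons_sublist_append_cons (by simpa using ha) h').reverse

end List

section Shuffle

open List

variable {α : Type*}

theorem Shuffle.succ (n : ℕ) (w : List α) :
    Shuffle (n + 1) w =
      Shuffle n (w.take (2 ^ n)) ++ Sum.inr (n + 1) :: Shuffle n (w.drop (2 ^ n)) := by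
  rw [Shuffle, List.append_assoc, List.singleton_append]

theorem le_of_inr_mem_shuffle {n m : ℕ} {w : List α} (h : Sum.inr m ∈ Shuffle n w) : m ≤ n := by
  induction n generalizing w with
  | zero => simp [Shuffle] at h
  | succ n ih =>
    rw [Shuffle.succ] at h
    simp only [mem_append, mem_cons, Sum.inr.injEq] at h
    rcases h with h | rfl | h
    · exact (ih h).trans n.le_succ
    · exact le_rfl
    · exact (ih h).trans n.le_succ

theorem inr_succ_not_mem_shuffle (n : ℕ) (w : List α) :
    (Sum.inr (n + 1) : α ⊕ ℕ) ∉ Shuffle n w :=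
  fun h => (le_of_inr_mem_shuffle h).not_gt n.lt_succ_self

theorem AP.sublist_shuffle_drop {n β : ℕ} {d : α} {w : List α} (hβ : 2 ^ n ≤ β)
    (h : AP (n + 1) β d <+ Shuffle (n + 1) w) :
    AP n (β - 2 ^ n) d <+ Shuffle n (w.drop (2 ^ n)) := by
  rw [AP, if_pos hβ, Shuffle.succ] at h
  exact List.sublist_of_cons_sublist_append_cons (inr_succ_not_mem_shuffle n _) h

theorem AP.sublist_shuffle_take {n β : ℕ} {d : α} {w : List α} (hβ : β < 2 ^ n)
    (h : AP (n + 1) β d <+ Shuffle (n + 1) w) :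
    AP n β d <+ Shuffle n (w.take (2 ^ n)) := by
  rw [AP, if_neg hβ.not_ge, Shuffle.succ] at h
  exact List.sublist_of_concat_sublist_append_cons (inr_succ_not_mem_shuffle n _) h

theorem eq_getElem_of_ap_sublist_shuffle {n β : ℕ} {d : α} {w : List α}
    (hw : w.length = 2 ^ n) (hβ : β < w.length) (h : AP n β d <+ Shuffle n w) : d = w[β] := by
  induction n generalizing β w with
  | zero =>
    obtain ⟨a, rfl⟩ := List.length_eq_one_iff.1 hw
    obtain rfl : β = 0 := by simpa using hβ
    simpa [AP, Shuffle] using h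
  | succ n ih =>
    have hpow : 2 ^ (n + 1) = 2 ^ n + 2 ^ n := by ring
    rcases lt_or_ge β (2 ^ n) with hlow | hhigh
    · have := ih (by simp; omega) (by simp; omega) (AP.sublist_shuffle_take hlow h)
      simpa using this
    · have := ih (by simp; omega) (by simp; omega) (AP.sublist_shuffle_drop hhigh h)
      simpa [Nat.add_sub_cancel' hhigh] using this

end Shuffle

theorem ap_sublist_unique_general {α : Type*} (n β : ℕ) (w : List α) (d : α)
    (hw : w.length = 2 ^ n) (hβw : β < w.length)
    (hsub : List.Sublist (AP n β d) (Shuffle n w)) :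
    d = w.get ⟨β, hβw⟩ :=
  eq_getElem_of_ap_sublist_shuffle hw hβw hsub

theorem ap_sublist_unique {α : Type*} (n β : ℕ) (w : List α) (d : α)
    (hw : w.length = 2 ^ n) (hβ : β < 2 ^ n) (hβw : β < w.length)
    (hsub : List.Sublist (AP n β d) (Shuffle n w)) :
    d = w.get ⟨β, hβw⟩ :=
  ap_sublist_unique_general n β w d hw hβw hsub
end
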